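/- There is a sufficiently small absolute constant c > 0 with the following property. Assume μ ≤ c·min{ (1/10)·‖X‖⁻², ‖(𝒜*𝒜 − ℐ)(X*Xᵀ − U_t*U_tᵀ)‖⁻¹ } and ‖U_t‖ ≤ 3‖X‖, that V_Xᵀ*U_t has full tubal rank with all invertible singular tubes, and that ‖V_{X⊥}ᵀ*V_{U_t*W_t}‖ ≤ c·κ⁻¹. Then ‖V_{X⊥}ᵀ*V_{U_{t+1}*W_t}‖ ≤ 2·‖V_{X⊥}ᵀ*V_{U_t*W_t}‖ + 2μ·‖(𝒜*𝒜)(X*Xᵀ − U_t*U_tᵀ)‖; in particular, ‖V_{X⊥}ᵀ*V_{U_{t+1}*W_t}‖ ≤ 1/50. -/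

import Mathlib

open scoped BigOperators ComplexOrder
open MeasureTheory

namespace Tubal

/-- A real tubal tensor of size `m × n × k`. -/
abbrev Tensor (m n k : ℕ) := Fin m → Fin n → Fin k → ℝ

/-- The `j`-th Fourier-domain (frontal) slice of a tubal tensor. -/
noncomputable def slice {m n k : ℕ} (T : Tensor m n k) (j : Fin k) :
    Matrix (Fin m) (Fin n) ℂ := fun i i' =>
  ∑ j' : Fin k, (T i i' j' : ℂ) *
    Complex.exp (-(2 * (Real.pi : ℂ) * Complex.I * ((j : ℕ) : ℂ) * ((j' : ℕ) : ℂ)) / ((k : ℕ) : ℂ))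

/-- The tubal product (t-product) of two tubal tensors. -/
def tprod {m q n k : ℕ} (A : Tensor m q k) (B : Tensor q n k) : Tensor m n k :=
  fun i i' l => ∑ p : Fin q, ∑ l' : Fin k, A i p l' * B p i' (l - l')

/-- The tubal transpose. -/
def ttr {m n k : ℕ} (T : Tensor m n k) : Tensor n m k := fun i i' j => T i' i (-j)

/-- The identity tubal tensor. -/
def tId (n k : ℕ) : Tensor n n k := fun i i' j => if i = i' ∧ (j : ℕ) = 0 then 1 else 0

/-- Frobenius norm of a tubal tensor. -/
noncomputable def frobNorm {m n k : ℕ} (T : Tensor m n k) : ℝ :=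
  Real.sqrt (∑ i, ∑ i', ∑ j, (T i i' j) ^ 2)

/-- Entrywise inner product of tubal tensors. -/
def tinner {m n k : ℕ} (T S : Tensor m n k) : ℝ := ∑ i, ∑ i', ∑ j, T i i' j * S i i' j

/-- ℓ₂-operator norm of a complex matrix. -/
noncomputable def matOpNorm {m n : ℕ} (M : Matrix (Fin m) (Fin n) ℂ) : ℝ :=
  ‖LinearMap.toContinuousLinearMap (Matrix.toEuclideanLin M)‖

/-- Tensor spectral norm: max over Fourier slices of operator norm. -/
noncomputable def specNorm {m n k : ℕ} (T : Tensor m n k) : ℝ :=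
  ⨆ j : Fin k, matOpNorm (slice T j)

/-- `i`-th largest singular value (0-based index into `Fin n`). -/
noncomputable def svalIdx {m n : ℕ} (M : Matrix (Fin m) (Fin n) ℂ) (i : Fin n) : ℝ :=
  Real.sqrt (((Matrix.isHermitian_conjTranspose_mul_self M).eigenvalues)
    ((Tuple.sort ((Matrix.isHermitian_conjTranspose_mul_self M).eigenvalues)) i.rev))

/-- `i`-th largest singular value of a matrix, `1`-based (σ₁ is the largest). -/
noncomputable def sval {m n : ℕ} (M : Matrix (Fin m) (Fin n) ℂ) (i : ℕ) : ℝ :=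
  if h : i - 1 < n then svalIdx M ⟨i - 1, h⟩ else 0

/-- Smallest singular value of an `m × n` matrix. -/
noncomputable def sminMat {m n : ℕ} (M : Matrix (Fin m) (Fin n) ℂ) : ℝ :=
  sval M (min m n)

/-- σ_min of the block-diagonal Fourier representation of a tensor:
the minimum over slices of the smallest singular value. -/
noncomputable def tSMin {m n k : ℕ} (T : Tensor m n k) : ℝ :=
  ⨅ j : Fin k, sminMat (slice T j)

/-- The tubal rank: maximum over slices of the matrix rank. -/
noncomputable def trank {m n k : ℕ} (T : Tensor m n k) : ℕ :=
  Finset.univ.sup fun j : Fin k => (slice T j).rank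

/-- Condition number `κ(T) = σ₁(T̄)/σ_{min{m,n}k}(T̄)`. -/
noncomputable def cond {m n k : ℕ} (T : Tensor m n k) : ℝ := specNorm T / tSMin T

/-- Tensor nuclear norm `(1/k)·Σ_{j,i} σ_i(T̄^{(j)})`. -/
noncomputable def nucNorm {m n k : ℕ} (T : Tensor m n k) : ℝ :=
  (1 / (k : ℝ)) * ∑ j : Fin k, ∑ i : Fin n, svalIdx (slice T j) i

/-- The linear measurement map `𝒜`. -/
def Ameas {n k m : ℕ} (A : Fin m → Tensor n n k) (Z : Tensor n n k) : Fin m → ℝ :=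
  fun i => tinner (A i) Z

/-- `𝒜*𝒜`. -/
def AtA {n k m : ℕ} (A : Fin m → Tensor n n k) (Z : Tensor n n k) : Tensor n n k :=
  fun p q l => ∑ i, tinner (A i) Z * A i p q l

/-- Restricted isometry property of rank `r` with constant `δ`. -/
def RIP {n k m : ℕ} (A : Fin m → Tensor n n k) (r : ℕ) (δ : ℝ) : Prop :=
  ∀ Z : Tensor n n k, ttr Z = Z → trank Z ≤ r →
    (1 - δ) * frobNorm Z ^ 2 ≤ ∑ i, (tinner (A i) Z) ^ 2 ∧
      ∑ i, (tinner (A i) Z) ^ 2 ≤ (1 + δ) * frobNorm Z ^ 2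

/-- Spectral-to-nuclear restricted isometry property. -/
def S2NRIP {n k m : ℕ} (A : Fin m → Tensor n n k) (δ : ℝ) : Prop :=
  ∀ Z : Tensor n n k, ttr Z = Z → specNorm (Z - AtA A Z) ≤ δ * nucNorm Z

/-- One gradient-descent step `U ↦ [𝕀 + μ(𝒜*𝒜)(X*Xᵀ − U*Uᵀ)]*U`. -/
noncomputable def gdStep {n r R k m : ℕ} (A : Fin m → Tensor n n k) (X : Tensor n r k)
    (μ : ℝ) (U : Tensor n R k) : Tensor n R k :=
  tprod (tId n k + μ • AtA A (tprod X (ttr X) - tprod U (ttr U))) U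

/-- Gradient descent iterates. -/
noncomputable def gdIter {n r R k m : ℕ} (A : Fin m → Tensor n n k) (X : Tensor n r k)
    (μ : ℝ) (U0 : Tensor n R k) : ℕ → Tensor n R k
  | 0 => U0
  | t + 1 => gdStep A X μ (gdIter A X μ U0 t)

/-- `t`-fold tubal power. -/
noncomputable def tpow {n k : ℕ} (T : Tensor n n k) : ℕ → Tensor n n k
  | 0 => tId n k
  | t + 1 => tprod T (tpow T t)

/-- Block-diagonal Fourier-domain matrix representation of a tensor. -/
noncomputable def bdiag {m n k : ℕ} (T : Tensor m n k) :
    Matrix (Fin k × Fin m) (Fin k × Fin n) ℂ :=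
  fun p q => if p.1 = q.1 then slice T p.1 p.2 q.2 else 0

/-- ℓ₂ norm of a complex vector. -/
noncomputable def l2norm {ι : Type*} [Fintype ι] (w : ι → ℂ) : ℝ :=
  Real.sqrt (∑ i, Complex.normSq (w i))

/-- i.i.d. Gaussian measure on tubal tensors, each entry `N(0, v)`. -/
noncomputable def gaussianTensor (n R k : ℕ) (v : NNReal) : Measure (Tensor n R k) :=
  Measure.pi fun _ => Measure.pi fun _ => Measure.pi fun _ =>
    ProbabilityTheory.gaussianReal 0 v

/-- The first `r` tensor columns. -/
def cols {a p k : ℕ} (T : Tensor a p k) (r : ℕ) (h : r ≤ p) : Tensor a r k :=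
  fun i s j => T i (Fin.castLE h s) j

/-- `W` is orthonormal: `Wᵀ*W = 𝕀`. -/
def ONB {p q k : ℕ} (W : Tensor p q k) : Prop := tprod (ttr W) W = tId q k

/-- `Q` is an orthogonal tubal tensor. -/
def Orthogonal {p k : ℕ} (Q : Tensor p p k) : Prop :=
  tprod Q (ttr Q) = tId p k ∧ tprod (ttr Q) Q = tId p k

/-- `V` is an orthonormal basis for the tensor-column space of `Y`. -/
def IsColBasis {a b q k : ℕ} (Y : Tensor a b k) (V : Tensor a q k) : Prop :=
  ONB V ∧ tprod V (tprod (ttr V) Y) = Y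

/-- `Vp` is an orthonormal complement of the orthonormal `V`. -/
def IsOrthCompl {a q q' k : ℕ} (V : Tensor a q k) (Vp : Tensor a q' k) : Prop :=
  ONB Vp ∧ tprod (ttr Vp) V = 0 ∧
    tprod V (ttr V) + tprod Vp (ttr Vp) = tId a k

/-- `S` is an f-diagonal tensor with nonnegative, nonincreasing (real) diagonal in
every Fourier slice: the middle factor of a t-SVD. -/
def IsFDiagSorted {p q k : ℕ} (S : Tensor p q k) : Prop :=
  (∀ j : Fin k, ∀ i : Fin p, ∀ i' : Fin q, (i : ℕ) ≠ (i' : ℕ) → slice S j i i' = 0) ∧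
  (∀ j : Fin k, ∀ i : Fin p, ∀ i' : Fin q, (i : ℕ) = (i' : ℕ) →
    (slice S j i i').im = 0 ∧ 0 ≤ (slice S j i i').re) ∧
  (∀ j : Fin k, ∀ i₁ i₂ : Fin p, ∀ i₁' i₂' : Fin q, (i₁ : ℕ) = (i₁' : ℕ) →
    (i₂ : ℕ) = (i₂' : ℕ) → (i₁ : ℕ) ≤ (i₂ : ℕ) →
    (slice S j i₂ i₂').re ≤ (slice S j i₁ i₁').re)

/-- `(V, S, W)` is a t-SVD of `T`. -/
def IsTSVD {p q k : ℕ} (T : Tensor p q k) (V : Tensor p p k) (S : Tensor p q k)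
    (W : Tensor q q k) : Prop :=
  Orthogonal V ∧ Orthogonal W ∧ IsFDiagSorted S ∧ T = tprod V (tprod S (ttr W))

/-!
Everything is checked slice by slice in the Fourier domain, where it becomes a statement about
matrices. Write `V`, `V'` for orthonormal bases of the columns of `U W` and `(1 + E) U W`, with
`E = μ M` and `‖E‖ ≤ 1/2`. Because `V_Xᴴ U` has full rank, `Vᴴ U W` is invertible, so `V'` spans the
columns of `B = (1 + E) V`; and `B` is bounded below by `1 - ‖E‖ ≥ 1/2`. Hence `V' = B D⁻¹` with
`‖D⁻¹‖ ≤ 2`, and `V_⊥ᴴ V' = (V_⊥ᴴ V + V_⊥ᴴ E V) D⁻¹` gives the factor `2`. With `c = 1/300` the step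
size bound makes `μ‖M‖ ≤ 2c` (split `M = (𝒜*𝒜 − ℐ)(D) + D` with `‖D‖ ≤ 10‖X‖²`), and `κ ≥ 1` makes
the initial angle at most `c`, whence the bound `6c = 1/50`.
-/

open scoped Matrix

section FourierSlice

variable {m n q k : ℕ}

noncomputable def fourierChar (k : ℕ) (j : Fin k) (x : ℕ) : ℂ :=
  Complex.exp (-(2 * (Real.pi : ℂ) * Complex.I * ((j : ℕ) : ℂ) * ((x : ℕ) : ℂ)) / ((k : ℕ) : ℂ))

lemma slice_apply (T : Tensor m n k) (j : Fin k) (i : Fin m) (i' : Fin n) :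
    slice T j i i' = ∑ l : Fin k, (T i i' l : ℂ) * fourierChar k j l := rfl

lemma fourierChar_add (j : Fin k) (a b : ℕ) :
    fourierChar k j (a + b) = fourierChar k j a * fourierChar k j b := by
  rw [fourierChar, fourierChar, fourierChar, ← Complex.exp_add]
  congr 1
  push_cast
  ring

lemma fourierChar_mul_left (j : Fin k) (a : ℕ) : fourierChar k j (k * a) = 1 := by
  have hk : ((k : ℕ) : ℂ) ≠ 0 := Nat.cast_ne_zero.2 j.pos.ne'
  rw [fourierChar, ← Complex.exp_int_mul_two_pi_mul_I (-(j * a : ℕ))]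
  congr 1
  field_simp
  push_cast
  ring

lemma fourierChar_mod (j : Fin k) (a : ℕ) : fourierChar k j (a % k) = fourierChar k j a := by
  conv_rhs => rw [← Nat.mod_add_div a k, fourierChar_add, fourierChar_mul_left, mul_one]

lemma fourierChar_fin_add (j a b : Fin k) :
    fourierChar k j ((a + b : Fin k) : ℕ) = fourierChar k j a * fourierChar k j b := by
  rw [Fin.val_add, fourierChar_mod, fourierChar_add]

lemma fourierChar_fin_neg (j l : Fin k) :
    fourierChar k j ((-l : Fin k) : ℕ) = starRingEnd ℂ (fourierChar k j l) := by
  have hconj : starRingEnd ℂ (fourierChar k j l) = (fourierChar k j l)⁻¹ := by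
    rw [fourierChar, ← Complex.exp_conj, ← Complex.exp_neg]
    congr 1
    simp only [map_div₀, map_neg, map_mul, Complex.conj_I, Complex.conj_ofReal, map_natCast,
      map_ofNat]
    ring
  have : NeZero k := ⟨j.pos.ne'⟩
  have hprod : fourierChar k j ((-l : Fin k) : ℕ) * fourierChar k j l = 1 := by
    rw [← fourierChar_fin_add, neg_add_cancel, fourierChar]
    simp
  rw [hconj]
  exact eq_inv_of_mul_eq_one_left hprod

lemma slice_ttr (T : Tensor m n k) (j : Fin k) : slice (ttr T) j = (slice T j)ᴴ := by
  ext i i'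
  rw [Matrix.conjTranspose_apply, slice_apply, slice_apply, star_sum]
  refine Fintype.sum_equiv (Equiv.neg (Fin k)) _ _ fun l => ?_
  simp only [ttr, Equiv.neg_apply, star_mul', Complex.star_def, Complex.conj_ofReal,
    fourierChar_fin_neg, Complex.conj_conj]

lemma slice_tprod (A : Tensor m q k) (B : Tensor q n k) (j : Fin k) :
    slice (tprod A B) j = slice A j * slice B j := by
  have : NeZero k := ⟨j.pos.ne'⟩
  ext i i'
  simp only [Matrix.mul_apply, slice_apply, tprod, Complex.ofReal_sum, Complex.ofReal_mul,
    Finset.sum_mul, Finset.mul_sum]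
  rw [Finset.sum_comm]
  refine Finset.sum_congr rfl fun p _ => ?_
  rw [Finset.sum_comm]
  conv_rhs => rw [Finset.sum_comm]
  refine Finset.sum_congr rfl fun l' _ => ?_
  refine Fintype.sum_equiv (Equiv.subRight l') _ _ fun l => ?_
  conv_lhs => rw [← sub_add_cancel l l', fourierChar_fin_add, sub_add_cancel]
  simp only [Equiv.subRight_apply]
  ring

lemma slice_add (S T : Tensor m n k) (j : Fin k) : slice (S + T) j = slice S j + slice T j := by
  ext i i'
  simp only [Matrix.add_apply, slice_apply, Pi.add_apply, Complex.ofReal_add, add_mul,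
    Finset.sum_add_distrib]

lemma slice_sub (S T : Tensor m n k) (j : Fin k) : slice (S - T) j = slice S j - slice T j := by
  ext i i'
  simp only [Matrix.sub_apply, slice_apply, Pi.sub_apply, Complex.ofReal_sub, sub_mul,
    Finset.sum_sub_distrib]

lemma slice_smul (c : ℝ) (T : Tensor m n k) (j : Fin k) :
    slice (c • T) j = (c : ℂ) • slice T j := by
  ext i i'
  simp only [Matrix.smul_apply, slice_apply, Pi.smul_apply, smul_eq_mul, Complex.ofReal_mul,
    Finset.mul_sum, mul_assoc]

lemma slice_tId (j : Fin k) : slice (tId n k) j = 1 := by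
  have : NeZero k := ⟨j.pos.ne'⟩
  ext i i'
  rw [slice_apply, Finset.sum_eq_single (0 : Fin k)]
  · by_cases h : i = i' <;> simp [tId, h, Matrix.one_apply, fourierChar]
  · intro l _ hl
    simp [tId, hl]
  · simp

end FourierSlice

section L2OpNorm

open scoped Matrix.Norms.L2Operator

lemma matOpNorm_eq_l2_opNorm {a b : ℕ} (M : Matrix (Fin a) (Fin b) ℂ) : matOpNorm M = ‖M‖ := rfl

lemma l2_opNorm_one_le {n : Type*} [Fintype n] [DecidableEq n] :
    ‖(1 : Matrix n n ℂ)‖ ≤ 1 := by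
  have h := Matrix.l2_opNorm_conjTranspose_mul_self (1 : Matrix n n ℂ)
  rw [Matrix.conjTranspose_one, Matrix.one_mul] at h
  nlinarith [norm_nonneg (1 : Matrix n n ℂ)]

lemma l2_opNorm_mul_of_conjTranspose_mul_self_eq_one {l m n : Type*} [Fintype l] [Fintype m]
    [Fintype n] [DecidableEq l] [DecidableEq n] {V : Matrix m n ℂ} (hV : Vᴴ * V = 1)
    (Y : Matrix n l ℂ) : ‖V * Y‖ = ‖Y‖ := by
  have h := Matrix.l2_opNorm_conjTranspose_mul_self (V * Y)
  rw [Matrix.conjTranspose_mul, Matrix.mul_assoc, ← Matrix.mul_assoc Vᴴ, hV, Matrix.one_mul,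
    Matrix.l2_opNorm_conjTranspose_mul_self] at h
  nlinarith [norm_nonneg (V * Y), norm_nonneg Y]

lemma l2_opNorm_le_one_of_conjTranspose_mul_self_eq_one {m n : Type*} [Fintype m] [Fintype n]
    [DecidableEq n] {V : Matrix m n ℂ} (hV : Vᴴ * V = 1) : ‖V‖ ≤ 1 := by
  rw [← Matrix.mul_one V, l2_opNorm_mul_of_conjTranspose_mul_self_eq_one hV]
  exact l2_opNorm_one_le

lemma eigenvalues_le_l2_opNorm {n : Type*} [Fintype n] [DecidableEq n] {A : Matrix n n ℂ}
    (hA : A.IsHermitian) (i : n) : hA.eigenvalues i ≤ ‖A‖ := by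
  have hv : ‖hA.eigenvectorBasis i‖ = 1 := hA.eigenvectorBasis.orthonormal.1 i
  have h := A.l2_opNorm_mulVec (hA.eigenvectorBasis i)
  simp only [hA.mulVec_eigenvectorBasis, PiLp.continuousLinearEquiv_symm_apply, WithLp.toLp_smul,
    WithLp.toLp_ofLp, norm_smul, Real.norm_eq_abs, hv, mul_one] at h
  exact (le_abs_self _).trans h

lemma svalIdx_le_matOpNorm {a b : ℕ} (M : Matrix (Fin a) (Fin b) ℂ) (i : Fin b) :
    svalIdx M i ≤ matOpNorm M := by
  rw [svalIdx, matOpNorm_eq_l2_opNorm, ← Real.sqrt_mul_self (norm_nonneg M),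
    ← Matrix.l2_opNorm_conjTranspose_mul_self]
  exact Real.sqrt_le_sqrt (eigenvalues_le_l2_opNorm _ _)

lemma sminMat_le_matOpNorm {a b : ℕ} (M : Matrix (Fin a) (Fin b) ℂ) : sminMat M ≤ matOpNorm M := by
  rw [sminMat, sval]
  split
  · exact svalIdx_le_matOpNorm M _
  · exact norm_nonneg _

end L2OpNorm

section SpecNorm

open scoped Matrix.Norms.L2Operator

variable {a b c k : ℕ}

lemma matOpNorm_slice_le_specNorm (T : Tensor a b k) (j : Fin k) :
    matOpNorm (slice T j) ≤ specNorm T :=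
  le_ciSup (f := fun j => matOpNorm (slice T j)) (Set.finite_range _).bddAbove j

lemma specNorm_nonneg (T : Tensor a b k) : 0 ≤ specNorm T :=
  Real.iSup_nonneg fun _ => norm_nonneg _

lemma specNorm_le_of_forall_slice {T : Tensor a b k} {C : ℝ} (hC : 0 ≤ C)
    (h : ∀ j, matOpNorm (slice T j) ≤ C) : specNorm T ≤ C :=
  Real.iSup_le h hC

lemma specNorm_add_le (S T : Tensor a b k) : specNorm (S + T) ≤ specNorm S + specNorm T :=
  specNorm_le_of_forall_slice (add_nonneg (specNorm_nonneg S) (specNorm_nonneg T)) fun j => by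
    rw [slice_add, matOpNorm_eq_l2_opNorm]
    exact (norm_add_le _ _).trans
      (add_le_add (matOpNorm_slice_le_specNorm S j) (matOpNorm_slice_le_specNorm T j))

lemma specNorm_sub_le (S T : Tensor a b k) : specNorm (S - T) ≤ specNorm S + specNorm T :=
  specNorm_le_of_forall_slice (add_nonneg (specNorm_nonneg S) (specNorm_nonneg T)) fun j => by
    rw [slice_sub, matOpNorm_eq_l2_opNorm]
    exact (norm_sub_le _ _).trans
      (add_le_add (matOpNorm_slice_le_specNorm S j) (matOpNorm_slice_le_specNorm T j))

lemma specNorm_tprod_le (S : Tensor a b k) (T : Tensor b c k) :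
    specNorm (tprod S T) ≤ specNorm S * specNorm T :=
  specNorm_le_of_forall_slice (mul_nonneg (specNorm_nonneg S) (specNorm_nonneg T)) fun j => by
    rw [slice_tprod, matOpNorm_eq_l2_opNorm]
    exact (Matrix.l2_opNorm_mul _ _).trans (mul_le_mul (matOpNorm_slice_le_specNorm S j)
      (matOpNorm_slice_le_specNorm T j) (norm_nonneg _) (specNorm_nonneg S))

lemma specNorm_ttr (T : Tensor a b k) : specNorm (ttr T) = specNorm T := by
  simp only [specNorm, slice_ttr, matOpNorm_eq_l2_opNorm, Matrix.l2_opNorm_conjTranspose]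

lemma tSMin_le_specNorm (T : Tensor a b k) : tSMin T ≤ specNorm T := by
  cases isEmpty_or_nonempty (Fin k) with
  | inl _ => simp [tSMin, specNorm]
  | inr h =>
    obtain ⟨j⟩ := h
    exact (ciInf_le (Set.finite_range _).bddBelow j).trans
      ((sminMat_le_matOpNorm _).trans (matOpNorm_slice_le_specNorm T j))

lemma inv_cond_le_one (T : Tensor a b k) : (cond T)⁻¹ ≤ 1 := by
  rw [cond, inv_div]
  exact div_le_one_of_le₀ (tSMin_le_specNorm T) (specNorm_nonneg T)

end SpecNorm

section ColumnSpacePerturbation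

open scoped Matrix.Norms.L2Operator

lemma isUnit_of_rank_eq_card {n K : Type*} [Fintype n] [DecidableEq n] [Field K]
    {Z : Matrix n n K} (h : Z.rank = Fintype.card n) : IsUnit Z := by
  rw [← Matrix.mulVec_surjective_iff_isUnit, ← Matrix.coe_mulVecLin, ← LinearMap.range_eq_top]
  apply Submodule.eq_top_of_finrank_eq
  rw [Module.finrank_fintype_fun_eq_card]
  exact h

lemma isUnit_of_forall_mul_eq_zero {n K : Type*} [Fintype n] [DecidableEq n] [Field K]
    {D : Matrix n n K} (h : ∀ Y : Matrix n Unit K, D * Y = 0 → Y = 0) : IsUnit D := by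
  rw [← Matrix.mulVec_injective_iff_isUnit, ← Matrix.coe_mulVecLin, injective_iff_map_eq_zero]
  intro v hv
  rw [← Matrix.replicateCol_eq_zero (ι := Unit)]
  apply h
  rw [← Matrix.replicateCol_mulVec, ← Matrix.mulVecLin_apply, hv, Matrix.replicateCol_zero]

lemma rank_mul_eq_card_of_mul_mul_eq {a r R K : Type*} [Fintype a] [Fintype r] [Fintype R]
    [Field K] {P : Matrix r a K} {U : Matrix a R K} {W : Matrix R r K} {W' : Matrix r R K}
    (hrank : (P * U).rank = Fintype.card r) (hW : P * U * (W * W') = P * U) :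
    (U * W).rank = Fintype.card r := by
  refine le_antisymm (Matrix.rank_le_card_width _) ?_
  calc Fintype.card r = (P * (U * W) * W').rank := by
        rw [← hrank, ← hW, Matrix.mul_assoc, Matrix.mul_assoc, Matrix.mul_assoc]
    _ ≤ (P * (U * W)).rank := Matrix.rank_mul_le_left _ _
    _ ≤ (U * W).rank := Matrix.rank_mul_le_right _ _

lemma l2_opNorm_le_two_mul_of_perturbation {l m n : Type*} [Fintype l] [Fintype m] [Fintype n]
    [DecidableEq l] [DecidableEq m] [DecidableEq n] {V : Matrix m n ℂ} (hV : Vᴴ * V = 1)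
    {E : Matrix m m ℂ} (hE : ‖E‖ ≤ 1 / 2) (Y : Matrix n l ℂ) :
    ‖Y‖ ≤ 2 * ‖(1 + E) * V * Y‖ := by
  have hVY : ‖V * Y‖ = ‖Y‖ := l2_opNorm_mul_of_conjTranspose_mul_self_eq_one hV Y
  have hEVY : ‖E * (V * Y)‖ ≤ ‖Y‖ / 2 := by
    refine (Matrix.l2_opNorm_mul _ _).trans ?_
    rw [hVY]
    nlinarith [norm_nonneg Y]
  have hsplit : (1 + E) * V * Y = V * Y + E * (V * Y) := by
    rw [Matrix.add_mul, Matrix.one_mul, Matrix.add_mul, Matrix.mul_assoc]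
  have htri := norm_sub_le (V * Y + E * (V * Y)) (E * (V * Y))
  rw [add_sub_cancel_right, hVY, ← hsplit] at htri
  linarith

theorem l2_opNorm_conjTranspose_mul_colBasis_perturbation_le {a p r : Type*} [Fintype a]
    [Fintype p] [Fintype r] [DecidableEq a] [DecidableEq p] [DecidableEq r]
    {Vp : Matrix a p ℂ} {V V' Y : Matrix a r ℂ} {E : Matrix a a ℂ}
    (hVp : Vpᴴ * Vp = 1) (hV : Vᴴ * V = 1) (hV' : V'ᴴ * V' = 1)
    (hY : V * (Vᴴ * Y) = Y) (hYrank : Y.rank = Fintype.card r)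
    (hY' : V' * (V'ᴴ * ((1 + E) * Y)) = (1 + E) * Y) (hE : ‖E‖ ≤ 1 / 2) :
    ‖Vpᴴ * V'‖ ≤ 2 * (‖Vpᴴ * V‖ + ‖E‖) := by
  set B := (1 + E) * V
  have hZ : IsUnit (Vᴴ * Y).det := by
    rw [← Matrix.isUnit_iff_isUnit_det]
    refine isUnit_of_rank_eq_card (le_antisymm (Matrix.rank_le_card_width _) ?_)
    calc Fintype.card r = (V * (Vᴴ * Y)).rank := by rw [hY, hYrank]
      _ ≤ (Vᴴ * Y).rank := Matrix.rank_mul_le_right _ _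
  -- `(1 + E) * Y = B * (Vᴴ * Y)` with `Vᴴ * Y` invertible, so `V'` spans the columns of `B`.
  have hB : V' * (V'ᴴ * B) = B := by
    calc V' * (V'ᴴ * B) = V' * (V'ᴴ * B) * (Vᴴ * Y) * (Vᴴ * Y)⁻¹ :=
          (Matrix.mul_nonsing_inv_cancel_right _ _ hZ).symm
      _ = B * (Vᴴ * Y) * (Vᴴ * Y)⁻¹ := by simp only [B, Matrix.mul_assoc, hY, hY']
      _ = B := Matrix.mul_nonsing_inv_cancel_right _ _ hZ
  set D := V'ᴴ * B
  have hD : IsUnit D := isUnit_of_forall_mul_eq_zero fun Z hDZ => by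
    have hlow : ‖Z‖ ≤ 2 * ‖B * Z‖ := l2_opNorm_le_two_mul_of_perturbation hV hE Z
    rw [← hB, Matrix.mul_assoc, hDZ, Matrix.mul_zero, norm_zero, mul_zero] at hlow
    exact norm_le_zero_iff.1 hlow
  have hV'B : V' = B * D⁻¹ := by
    rw [← hB, Matrix.mul_nonsing_inv_cancel_right _ _ ((Matrix.isUnit_iff_isUnit_det D).1 hD)]
  have hDinv : ‖D⁻¹‖ ≤ 2 := by
    have hlow : ‖D⁻¹‖ ≤ 2 * ‖B * D⁻¹‖ := l2_opNorm_le_two_mul_of_perturbation hV hE D⁻¹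
    rw [← hV'B] at hlow
    linarith [l2_opNorm_le_one_of_conjTranspose_mul_self_eq_one hV']
  have hVpEV : ‖Vpᴴ * E * V‖ ≤ ‖E‖ := by
    have hVpNorm : ‖Vpᴴ‖ ≤ 1 := by
      rw [Matrix.l2_opNorm_conjTranspose]
      exact l2_opNorm_le_one_of_conjTranspose_mul_self_eq_one hVp
    calc ‖Vpᴴ * E * V‖ ≤ ‖Vpᴴ‖ * ‖E‖ * ‖V‖ :=
          (Matrix.l2_opNorm_mul _ _).trans (by gcongr; exact Matrix.l2_opNorm_mul _ _)
      _ ≤ 1 * ‖E‖ * 1 := by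
          gcongr
          exact l2_opNorm_le_one_of_conjTranspose_mul_self_eq_one hV
      _ = ‖E‖ := by ring
  calc ‖Vpᴴ * V'‖ = ‖(Vpᴴ * V + Vpᴴ * E * V) * D⁻¹‖ := by
        rw [hV'B]
        simp only [B, Matrix.mul_add, Matrix.add_mul, Matrix.mul_assoc, Matrix.one_mul]
    _ ≤ ‖Vpᴴ * V + Vpᴴ * E * V‖ * ‖D⁻¹‖ := Matrix.l2_opNorm_mul _ _
    _ ≤ (‖Vpᴴ * V‖ + ‖E‖) * 2 := by
        gcongr
        exact (norm_add_le _ _).trans (add_le_add_right hVpEV _)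
    _ = 2 * (‖Vpᴴ * V‖ + ‖E‖) := mul_comm _ _

end ColumnSpacePerturbation

section Slices

variable {a b c k : ℕ}

lemma ONB.conjTranspose_slice_mul_slice {V : Tensor a b k} (h : ONB V) (j : Fin k) :
    (slice V j)ᴴ * slice V j = 1 := by
  simpa only [slice_tprod, slice_ttr, slice_tId] using congrArg (slice · j) h

lemma IsColBasis.slice_mul_conjTranspose_mul {Y : Tensor a b k} {V : Tensor a c k}
    (h : IsColBasis Y V) (j : Fin k) : slice V j * ((slice V j)ᴴ * slice Y j) = slice Y j := by
  simpa only [slice_tprod, slice_ttr] using congrArg (slice · j) h.2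

end Slices

open scoped Matrix.Norms.L2Operator in
theorem specNorm_angle_step_le {n p r R k : ℕ} {VX : Tensor n r k} {VXp : Tensor n p k}
    {U : Tensor n R k} {W : Tensor R r k} {M : Tensor n n k} {μ : ℝ} {VUW VUpW : Tensor n r k}
    (hμ : 0 ≤ μ) (hμM : μ * specNorm M ≤ 1 / 2) (hVXp : ONB VXp)
    (hfull : ∀ j, (slice (tprod (ttr VX) U) j).rank = r)
    (hWfact : tprod (tprod (ttr VX) U) (tprod W (ttr W)) = tprod (ttr VX) U)
    (hVUW : IsColBasis (tprod U W) VUW)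
    (hVUpW : IsColBasis (tprod (tprod (tId n k + μ • M) U) W) VUpW) :
    specNorm (tprod (ttr VXp) VUpW) ≤ 2 * (specNorm (tprod (ttr VXp) VUW) + μ * specNorm M) := by
  refine specNorm_le_of_forall_slice (mul_nonneg zero_le_two
    (add_nonneg (specNorm_nonneg _) (mul_nonneg hμ (specNorm_nonneg M)))) fun j => ?_
  have hE : ‖(μ : ℂ) • slice M j‖ ≤ μ * specNorm M := by
    rw [norm_smul, Complex.norm_real, Real.norm_of_nonneg hμ]
    exact mul_le_mul_of_nonneg_left (matOpNorm_slice_le_specNorm M j) hμ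
  have hrank : (slice (tprod U W) j).rank = Fintype.card (Fin r) := by
    rw [slice_tprod]
    refine rank_mul_eq_card_of_mul_mul_eq (P := (slice VX j)ᴴ) (W' := (slice W j)ᴴ) ?_ ?_
    · simpa only [slice_tprod, slice_ttr, Fintype.card_fin] using hfull j
    · simpa only [slice_tprod, slice_ttr] using congrArg (slice · j) hWfact
  have hnew := hVUpW.slice_mul_conjTranspose_mul j
  rw [slice_tprod, slice_tprod, slice_add, slice_smul, slice_tId, Matrix.mul_assoc,
    ← slice_tprod] at hnew
  have hangle := matOpNorm_slice_le_specNorm (tprod (ttr VXp) VUW) j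
  rw [slice_tprod, slice_ttr, matOpNorm_eq_l2_opNorm] at hangle ⊢
  calc ‖(slice VXp j)ᴴ * slice VUpW j‖
      ≤ 2 * (‖(slice VXp j)ᴴ * slice VUW j‖ + ‖(μ : ℂ) • slice M j‖) :=
        l2_opNorm_conjTranspose_mul_colBasis_perturbation_le
          (hVXp.conjTranspose_slice_mul_slice j) (hVUW.1.conjTranspose_slice_mul_slice j)
          (hVUpW.1.conjTranspose_slice_mul_slice j) (hVUW.slice_mul_conjTranspose_mul j) hrank
          hnew (hE.trans hμM)
    _ ≤ 2 * (specNorm (tprod (ttr VXp) VUW) + μ * specNorm M) := by gcongr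

lemma mul_le_of_le_mul_inv_of_nonneg {μ c x : ℝ} (hc : 0 ≤ c) (hx : 0 ≤ x) (h : μ ≤ c * x⁻¹) :
    μ * x ≤ c := by
  rcases hx.eq_or_lt with rfl | hx
  · simpa using hc
  · exact (le_mul_inv_iff₀ hx).1 h

/-- There is a small absolute constant `c > 0` such that, under the
stated conditions, `‖V_{X⊥}ᵀ*V_{U_{t+1}*W_t}‖ ≤ 2‖V_{X⊥}ᵀ*V_{U_t*W_t}‖
 + 2μ‖(𝒜*𝒜)(X*Xᵀ − U_t*U_tᵀ)‖`, and in particular `‖V_{X⊥}ᵀ*V_{U_{t+1}*W_t}‖ ≤ 1/50`. -/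
theorem statement11 :
    ∃ c : ℝ, 0 < c ∧
    ∀ (n r R k m : ℕ) (_hr : r ≤ n) (_hrR : r ≤ R)
      (A : Fin m → Tensor n n k) (_hAsym : ∀ i, ttr (A i) = A i)
      (X : Tensor n r k) (_hrank : trank X = r)
      (μ : ℝ) (_hμ0 : 0 < μ) (U : Tensor n R k)
      (VX : Tensor n r k) (_hVX : IsColBasis X VX)
      (VXp : Tensor n (n - r) k) (_hVXp : IsOrthCompl VX VXp)
      (W : Tensor R r k) (_hW : ONB W)
      (_hWfact : tprod (tprod (ttr VX) U) (tprod W (ttr W)) = tprod (ttr VX) U)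
      (Wp : Tensor R (R - r) k) (_hWp : IsOrthCompl W Wp)
      (VUW : Tensor n r k) (_hVUW : IsColBasis (tprod U W) VUW)
      (_hμ : μ ≤ c * min ((1 / 10) * (specNorm X ^ 2)⁻¹)
          ((specNorm (AtA A (tprod X (ttr X) - tprod U (ttr U)) -
            (tprod X (ttr X) - tprod U (ttr U))))⁻¹))
      (_hU : specNorm U ≤ 3 * specNorm X)
      (_hfull : ∀ j : Fin k, (slice (tprod (ttr VX) U) j).rank = r)
      (_hangle : specNorm (tprod (ttr VXp) VUW) ≤ c * (cond X)⁻¹),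
      ∀ VUpW : Tensor n r k, IsColBasis (tprod (gdStep A X μ U) W) VUpW →
        specNorm (tprod (ttr VXp) VUpW) ≤
          2 * specNorm (tprod (ttr VXp) VUW) +
            2 * μ * specNorm (AtA A (tprod X (ttr X) - tprod U (ttr U))) ∧
        specNorm (tprod (ttr VXp) VUpW) ≤ 1 / 50 := by
  refine ⟨1 / 300, by norm_num, ?_⟩
  intro n r R k m _ _ A _ X _ μ hμ0 U VX _ VXp hVXp W _ hWfact Wp _ VUW hVUW hμ hU hfull hangle
    VUpW hVUpW
  set D := tprod X (ttr X) - tprod U (ttr U)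
  have hD : specNorm D ≤ 10 * specNorm X ^ 2 := by
    have hsq : ∀ {b : ℕ} (T : Tensor n b k), specNorm (tprod T (ttr T)) ≤ specNorm T ^ 2 :=
      fun T => (specNorm_tprod_le _ _).trans_eq (by rw [specNorm_ttr, sq])
    have hU2 : specNorm U ^ 2 ≤ (3 * specNorm X) ^ 2 := pow_le_pow_left₀ (specNorm_nonneg U) hU 2
    linarith [specNorm_sub_le (tprod X (ttr X)) (tprod U (ttr U)), hsq X, hsq U]
  have hμD : μ * specNorm D ≤ 1 / 300 := by
    have hμX : μ ≤ 1 / 300 * (10 * specNorm X ^ 2)⁻¹ := by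
      rw [mul_inv, ← one_div]
      exact hμ.trans (mul_le_mul_of_nonneg_left (min_le_left _ _) (by norm_num))
    exact (mul_le_mul_of_nonneg_left hD hμ0.le).trans
      (mul_le_of_le_mul_inv_of_nonneg (by norm_num) (by positivity) hμX)
  have hμE : μ * specNorm (AtA A D - D) ≤ 1 / 300 :=
    mul_le_of_le_mul_inv_of_nonneg (by norm_num) (specNorm_nonneg _)
      (hμ.trans (mul_le_mul_of_nonneg_left (min_le_right _ _) (by norm_num)))
  have hμM : μ * specNorm (AtA A D) ≤ 2 / 300 := by
    have htri := specNorm_add_le (AtA A D - D) D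
    rw [sub_add_cancel] at htri
    nlinarith
  have hθ : specNorm (tprod (ttr VXp) VUW) ≤ 1 / 300 :=
    hangle.trans (mul_le_of_le_one_right (by norm_num) (inv_cond_le_one X))
  have hstep := specNorm_angle_step_le hμ0.le (by linarith) hVXp.1 hfull hWfact hVUW hVUpW
  exact ⟨by linarith, by linarith⟩

end Tubal
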